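/- With f : F_n(X × Q) → F_n(X) × Q defined by f(A) = (π_X(A), η_p(π_Q(A))), every fiber f⁻¹(({x₁,…,x_ℓ}, q)) is contractible: the homotopy G({(y₁,q₁),…,(y_r,q_r)}, t) = {(y₁,(1−t)q₁+tq),…,(y_r,(1−t)q_r+tq)} maps f⁻¹(A) × [0,1] into f⁻¹(A) and contracts f⁻¹(A) to the point {(x₁,q),…,(x_ℓ,q)}. -/

import Mathlib

open Metric TopologicalSpace Set Filter unitInterval

/-- The n-th symmetric product: nonempty subsets with at most n points,
as a subspace of the nonempty compact subsets with the Hausdorff metric. -/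
abbrev SymProd (X : Type*) [MetricSpace X] (n : ℕ) :=
  {A : NonemptyCompacts X // (A : Set X).Finite ∧ (A : Set X).ncard ≤ n}

/-- A Z-set in a metric space. -/
def IsZSet {Y : Type*} [MetricSpace Y] (A : Set Y) : Prop :=
  IsClosed A ∧ ∀ ε > 0, ∃ f : Y → Y, Continuous f ∧ (∀ y, f y ∉ A) ∧ ∀ y, dist y (f y) < ε

/-- A Z-map: a continuous map whose image is a Z-set. -/
def IsZMap {X Y : Type*} [MetricSpace X] [MetricSpace Y] (f : X → Y) : Prop :=
  Continuous f ∧ IsZSet (Set.range f)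


/-- The Hilbert space ℓ₂ of square-summable real sequences. -/
noncomputable abbrev ellTwo := lp (fun _ : ℕ => ℝ) 2

/-! The fibrewise straight-line homotopy `(x, q) ↦ (x, (1 - t) • q + t • q₀)` leaves the
`X`-projection of a point of the fibre untouched and moves its `Q`-projection `K` by the homothety
with centre `q₀ = η_p(K)` and ratio `1 - t`. That homothety maps `co(K)` into itself and fixes
`q₀`, so `q₀` is still the point of the new hull nearest to `p` (nearest points in convex subsets
of a strictly convex space are unique), and the homotopy stays in the fibre. It is continuous for
the Hausdorff metric because it is `1`-Lipschitz in the point and `diam Q`-Lipschitz in time. -/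

open AffineMap (homothety lineMap)
open scoped NNReal ENNReal

section NearestPoint

variable {E : Type*} [NormedAddCommGroup E] [NormedSpace ℝ E]

theorem Convex.eq_of_isMinOn_dist [StrictConvexSpace ℝ E] {C : Set E} (hC : Convex ℝ C)
    {p a b : E} (ha : a ∈ C) (hb : b ∈ C) (ha' : IsMinOn (dist p) C a)
    (hb' : IsMinOn (dist p) C b) : a = b := by
  by_contra hab
  have hmid := (sbtw_midpoint_of_ne ℝ hab).dist_lt_max_dist p
  have hma : dist p a ≤ dist p (midpoint ℝ a b) := ha' (hC.midpoint_mem ha hb)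
  have hba : dist p b ≤ dist p a := hb' ha
  simp only [dist_comm _ p] at hmid
  rw [max_eq_left hba] at hmid
  linarith

theorem convexHull_image_homothety_subset {S : Set E} {q : E} {r : ℝ}
    (hq : q ∈ convexHull ℝ S) (hr : r ∈ Icc (0 : ℝ) 1) :
    convexHull ℝ (homothety q r '' S) ⊆ convexHull ℝ S := by
  refine convexHull_min (image_subset_iff.2 fun x hx => ?_) (convex_convexHull ℝ S)
  rw [mem_preimage, AffineMap.homothety_eq_lineMap]
  exact (convex_convexHull ℝ S).lineMap_mem hq (subset_convexHull ℝ S hx) hr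

theorem mem_convexHull_image_homothety {S : Set E} {q : E} (r : ℝ) (hq : q ∈ convexHull ℝ S) :
    q ∈ convexHull ℝ (homothety q r '' S) := by
  rw [← AffineMap.image_convexHull]
  exact ⟨q, hq, AffineMap.homothety_apply_same q r⟩

theorem eq_of_isMinOn_dist_convexHull_image_homothety [StrictConvexSpace ℝ E] {S : Set E}
    {p q q' : E} {r : ℝ} (hr : r ∈ Icc (0 : ℝ) 1) (hq : q ∈ convexHull ℝ S)
    (hq_min : IsMinOn (dist p) (convexHull ℝ S) q) (hq' : q' ∈ convexHull ℝ (homothety q r '' S))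
    (hq'_min : IsMinOn (dist p) (convexHull ℝ (homothety q r '' S)) q') : q' = q :=
  (convex_convexHull ℝ _).eq_of_isMinOn_dist hq' (mem_convexHull_image_homothety r hq) hq'_min
    (hq_min.on_subset (convexHull_image_homothety_subset hq hr))

end NearestPoint

namespace TopologicalSpace.NonemptyCompacts

variable {α β : Type*} [EMetricSpace α] [EMetricSpace β]

theorem exists_edist_le_edist {s t : NonemptyCompacts α} {x : α} (hx : x ∈ s) :
    ∃ y ∈ t, edist x y ≤ edist s t := by
  obtain ⟨y, hy, hxy⟩ := t.isCompact.exists_infEDist_eq_edist t.nonempty x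
  exact ⟨y, hy, hxy ▸ infEDist_le_hausdorffEDist_of_mem hx⟩

theorem lipschitzWith_map {F : α → β} {K : ℝ≥0} (hF : LipschitzWith K F) :
    LipschitzWith K fun s : NonemptyCompacts α => s.map F hF.continuous := by
  have key : ∀ s t : NonemptyCompacts α, ∀ x ∈ (s : Set α),
      ∃ y ∈ F '' t, edist (F x) y ≤ K * edist s t := fun s t x hx => by
    obtain ⟨y, hy, hxy⟩ := exists_edist_le_edist (t := t) hx
    exact ⟨F y, mem_image_of_mem F hy, (hF x y).trans (by gcongr)⟩
  intro s t
  apply hausdorffEDist_le_of_mem_edist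
  · rintro _ ⟨x, hx, rfl⟩
    exact key s t x hx
  · rintro _ ⟨x, hx, rfl⟩
    rw [edist_comm s]
    exact key t s x hx

theorem edist_map_map_le {F G : α → β} (hF : Continuous F) (hG : Continuous G) {r : ℝ≥0∞}
    (hFG : ∀ x, edist (F x) (G x) ≤ r) (s : NonemptyCompacts α) :
    edist (s.map F hF) (s.map G hG) ≤ r := by
  apply hausdorffEDist_le_of_mem_edist
  · rintro _ ⟨x, hx, rfl⟩
    exact ⟨G x, mem_image_of_mem G hx, hFG x⟩
  · rintro _ ⟨x, hx, rfl⟩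
    exact ⟨F x, mem_image_of_mem F hx, edist_comm (G x) (F x) ▸ hFG x⟩

theorem lipschitzWith_map_uncurry {T : Type*} [PseudoEMetricSpace T] {H : T → α → β}
    {K L : ℝ≥0} (hH : ∀ t, LipschitzWith K (H t)) (hH_time : ∀ x, LipschitzWith L (H · x)) :
    LipschitzWith (K + L) fun st : NonemptyCompacts α × T =>
      st.1.map (H st.2) (hH st.2).continuous :=
  LipschitzWith.uncurry (f := fun s t => s.map (H t) (hH t).continuous)
    (fun t => lipschitzWith_map (hH t))
    (fun s t t' => edist_map_map_le _ _ (fun x => hH_time x t t') s)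

end TopologicalSpace.NonemptyCompacts

def SymProd.map {α β : Type*} [MetricSpace α] [MetricSpace β] {n : ℕ} (F : α → β)
    (hF : Continuous F) (A : SymProd α n) : SymProd β n :=
  ⟨A.1.map F hF, A.2.1.image F, (ncard_image_le A.2.1).trans A.2.2⟩

@[simp]
theorem SymProd.coe_map {α β : Type*} [MetricSpace α] [MetricSpace β] {n : ℕ} (F : α → β)
    (hF : Continuous F) (A : SymProd α n) : ((SymProd.map F hF A).1 : Set β) = F '' A.1 :=
  rfl

section ContractSnd

variable {E : Type*} [NormedAddCommGroup E] [NormedSpace ℝ E] {Q : Set E} (hQ : Convex ℝ Q)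
  (q₀ : Q) {X : Type*}

def Convex.contractSnd (t : I) (z : X × Q) : X × Q :=
  (z.1, ⟨lineMap (z.2 : E) q₀ (t : ℝ), hQ.lineMap_mem z.2.2 q₀.2 t.2⟩)

variable {hQ q₀}

@[simp]
theorem Convex.contractSnd_fst (t : I) (z : X × Q) : (hQ.contractSnd q₀ t z).1 = z.1 :=
  rfl

theorem Convex.coe_contractSnd_snd (t : I) (z : X × Q) :
    ((hQ.contractSnd q₀ t z).2 : E) = (1 - (t : ℝ)) • (z.2 : E) + (t : ℝ) • (q₀ : E) :=
  AffineMap.lineMap_apply_module _ _ _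

theorem Convex.coe_contractSnd_snd_eq_homothety (t : I) (z : X × Q) :
    ((hQ.contractSnd q₀ t z).2 : E) = homothety (q₀ : E) (1 - (t : ℝ)) z.2 := by
  rw [AffineMap.homothety_eq_lineMap, AffineMap.lineMap_apply_one_sub]
  rfl

theorem Convex.contractSnd_zero : hQ.contractSnd q₀ 0 = (id : X × Q → X × Q) := by
  ext z
  · rfl
  · simp [Convex.contractSnd]

theorem Convex.contractSnd_one (z : X × Q) : hQ.contractSnd q₀ 1 z = (z.1, q₀) := by
  ext
  · rfl
  · simp [Convex.contractSnd]

theorem Convex.mem_image_contractSnd_iff {t : I} {s : Set (X × Q)} {z : X × Q} :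
    z ∈ hQ.contractSnd q₀ t '' s ↔
      ∃ w ∈ s, z.1 = w.1 ∧ (z.2 : E) = (1 - (t : ℝ)) • (w.2 : E) + (t : ℝ) • (q₀ : E) := by
  refine ⟨?_, fun ⟨w, hw, h_fst, h_snd⟩ => ⟨w, hw, Prod.ext h_fst.symm (Subtype.ext ?_)⟩⟩
  · rintro ⟨w, hw, rfl⟩
    exact ⟨w, hw, rfl, coe_contractSnd_snd t w⟩
  · rw [h_snd, coe_contractSnd_snd]

theorem Convex.image_contractSnd_one (s : Set (X × Q)) :
    hQ.contractSnd q₀ 1 '' s = (Prod.fst '' s) ×ˢ {q₀} := by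
  ext ⟨x, q⟩
  simp [contractSnd_one, eq_comm]

variable [PseudoMetricSpace X]

theorem Convex.lipschitzWith_contractSnd (t : I) :
    LipschitzWith 1 (hQ.contractSnd q₀ t (X := X)) := by
  refine LipschitzWith.of_dist_le_mul fun z w => ?_
  rw [NNReal.coe_one, one_mul, Prod.dist_eq, Prod.dist_eq]
  refine max_le_max le_rfl ?_
  rw [Subtype.dist_eq, Subtype.dist_eq, dist_eq_norm, dist_eq_norm, coe_contractSnd_snd,
    coe_contractSnd_snd, add_sub_add_right_eq_sub, ← smul_sub, norm_smul, Real.norm_eq_abs,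
    abs_of_nonneg (sub_nonneg.2 t.2.2)]
  exact mul_le_of_le_one_left (norm_nonneg _) (sub_le_self _ t.2.1)

theorem Convex.lipschitzWith_contractSnd_time (z : X × Q) :
    LipschitzWith (nndist z.2 q₀) (hQ.contractSnd q₀ · z) := by
  refine LipschitzWith.of_dist_le_mul fun t t' => ?_
  rw [Prod.dist_eq, contractSnd_fst, contractSnd_fst, dist_self, Subtype.dist_eq,
    Convex.contractSnd, Convex.contractSnd, dist_lineMap_lineMap, coe_nndist, mul_comm]
  exact max_le (by positivity) le_rfl

end ContractSnd

theorem apply_symProdMap_contractSnd {E : Type*} [NormedAddCommGroup E] [NormedSpace ℝ E]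
    [StrictConvexSpace ℝ E] {X : Type*} [MetricSpace X] {n : ℕ} {Q : Set E} (hQ : Convex ℝ Q)
    {p : E} {η : SymProd Q n → Q}
    (hη : ∀ K : SymProd Q n,
      ((η K : Q) : E) ∈ convexHull ℝ (((↑) : Q → E) '' (K.1 : Set Q)) ∧
      ∀ z ∈ convexHull ℝ (((↑) : Q → E) '' (K.1 : Set Q)), dist p ((η K : Q) : E) ≤ dist p z)
    {f : SymProd (X × Q) n → SymProd X n × Q}
    (hf : ∀ A : SymProd (X × Q) n,
      ((f A).1.1 : Set X) = Prod.fst '' (A.1 : Set (X × Q)) ∧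
      ∃ K : SymProd Q n, (K.1 : Set Q) = Prod.snd '' (A.1 : Set (X × Q)) ∧ (f A).2 = η K)
    {B : SymProd (X × Q) n} {S : SymProd X n} {q₀ : Q} (hB : f B = (S, q₀)) (t : I) :
    f (SymProd.map _ (hQ.lipschitzWith_contractSnd (q₀ := q₀) t).continuous B) = (S, q₀) := by
  obtain ⟨hB_fst, K, hK, hB_snd⟩ := hf B
  obtain ⟨hB'_fst, K', hK', hB'_snd⟩ :=
    hf (SymProd.map _ (hQ.lipschitzWith_contractSnd (q₀ := q₀) t).continuous B)
  have hS : (S.1 : Set X) = Prod.fst '' (B.1 : Set (X × Q)) := by rw [← hB_fst, hB]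
  have hq₀ : η K = q₀ := by rw [← hB_snd, hB]
  refine Prod.ext (Subtype.ext (NonemptyCompacts.ext ?_)) ?_
  · rw [hB'_fst, SymProd.coe_map, image_image]
    exact hS.symm
  have hK'_eq : ((↑) : Q → E) '' (K'.1 : Set Q) =
      homothety (q₀ : E) (1 - (t : ℝ)) '' (((↑) : Q → E) '' (K.1 : Set Q)) := by
    simp only [hK', hK, SymProd.coe_map, image_image, Convex.coe_contractSnd_snd_eq_homothety]
  obtain ⟨hηK, hηK_min⟩ := hη K
  obtain ⟨hηK', hηK'_min⟩ := hη K'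
  rw [hq₀] at hηK hηK_min
  rw [hK'_eq] at hηK' hηK'_min
  rw [hB'_snd]
  exact Subtype.ext <| eq_of_isMinOn_dist_convexHull_image_homothety
    ⟨sub_nonneg.2 t.2.2, sub_le_self _ t.2.1⟩ hηK (isMinOn_iff.2 hηK_min) hηK'
    (isMinOn_iff.2 hηK'_min)

theorem Convex.continuous_symProdMap_contractSnd {E : Type*} [NormedAddCommGroup E]
    [NormedSpace ℝ E] {X : Type*} [MetricSpace X] {n : ℕ} {Q : Set E} (hQ : Convex ℝ Q)
    (hQ_bdd : Bornology.IsBounded Q) (q₀ : Q) :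
    Continuous fun Bt : SymProd (X × Q) n × I =>
      SymProd.map _ (hQ.lipschitzWith_contractSnd (q₀ := q₀) Bt.2).continuous Bt.1 := by
  have h_time (z : X × Q) :
      LipschitzWith (diam Q).toNNReal (hQ.contractSnd q₀ · z) :=
    (hQ.lipschitzWith_contractSnd_time z).weaken <| by
      rw [← NNReal.coe_le_coe, coe_nndist, Real.coe_toNNReal _ diam_nonneg]
      exact dist_le_diam_of_mem hQ_bdd z.2.2 q₀.2
  refine Continuous.subtype_mk ?_ _
  exact (NonemptyCompacts.lipschitzWith_map_uncurry hQ.lipschitzWith_contractSnd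
    h_time).continuous.comp (continuous_subtype_val.prodMap continuous_id)

theorem stmt16_general {X : Type*} [MetricSpace X] (n : ℕ)
    (Q : Set ellTwo) (hconv : Convex ℝ Q) (hcomp : IsCompact Q)
    (p : ellTwo)
    (η : SymProd Q n → Q)
    (hη : ∀ K : SymProd Q n,
      ((η K : Q) : ellTwo) ∈ convexHull ℝ (((↑) : Q → ellTwo) '' (K.1 : Set Q)) ∧
      ∀ z ∈ convexHull ℝ (((↑) : Q → ellTwo) '' (K.1 : Set Q)),
        dist p ((η K : Q) : ellTwo) ≤ dist p z)
    (f : SymProd (X × Q) n → SymProd X n × Q)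
    (hf : ∀ A : SymProd (X × Q) n,
      ((f A).1.1 : Set X) = Prod.fst '' (A.1 : Set (X × Q)) ∧
      ∃ K : SymProd Q n, (K.1 : Set Q) = Prod.snd '' (A.1 : Set (X × Q)) ∧ (f A).2 = η K)
    (S : SymProd X n) (q₀ : Q) :
    (∀ B : SymProd (X × Q) n, f B = (S, q₀) → ∀ t : I, ∀ B' : SymProd (X × Q) n,
      (∀ z : X × Q, z ∈ (B'.1 : Set (X × Q)) ↔ ∃ w ∈ (B.1 : Set (X × Q)),
        z.1 = w.1 ∧ (z.2 : ellTwo) = (1 - (t : ℝ)) • ((w.2 : Q) : ellTwo) + (t : ℝ) • (q₀ : ellTwo)) →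
      f B' = (S, q₀)) ∧
    ∃ G : {B : SymProd (X × Q) n // f B = (S, q₀)} × I →
        {B : SymProd (X × Q) n // f B = (S, q₀)},
      Continuous G ∧
      (∀ B t, ∀ z : X × Q, z ∈ ((G (B, t)).1.1 : Set (X × Q)) ↔
        ∃ w ∈ (B.1.1 : Set (X × Q)), z.1 = w.1 ∧
          (z.2 : ellTwo) = (1 - (t : ℝ)) • ((w.2 : Q) : ellTwo) + (t : ℝ) • (q₀ : ellTwo)) ∧
      (∀ B, G (B, 0) = B) ∧
      ∀ B, ((G (B, 1)).1.1 : Set (X × Q)) = {z : X × Q | z.1 ∈ (S.1 : Set X) ∧ z.2 = q₀} := by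
  have h_fiber {B} (hB : f B = (S, q₀)) (t : I) :=
    apply_symProdMap_contractSnd hconv hη hf hB t
  refine ⟨fun B hB t B' hB' => ?_, fun Bt => ⟨_, h_fiber Bt.1.2 Bt.2⟩,
    ((hconv.continuous_symProdMap_contractSnd hcomp.isBounded q₀).comp
      (continuous_subtype_val.prodMap continuous_id)).subtype_mk _,
    fun B t z => hconv.mem_image_contractSnd_iff, fun B => ?_, fun B => ?_⟩
  · convert h_fiber hB t
    exact Subtype.ext <| NonemptyCompacts.ext <| Set.ext fun z =>
      (hB' z).trans hconv.mem_image_contractSnd_iff.symm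
  · refine Subtype.ext <| Subtype.ext <| NonemptyCompacts.ext ?_
    rw [SymProd.coe_map, hconv.contractSnd_zero, image_id]
  · have hS : ((f B.1).1.1 : Set X) = S.1 := by rw [B.2]
    rw [SymProd.coe_map, hconv.image_contractSnd_one, ← (hf B.1).1, hS]
    rfl

theorem stmt16 {X : Type*} [MetricSpace X] (n : ℕ) (hn : 0 < n)
    (Q : Set ellTwo) (hconv : Convex ℝ Q) (hcomp : IsCompact Q)
    (hQ : Nonempty (Q ≃ₜ (ℕ → I))) (p : ellTwo) (hp : p ∈ Q)
    (η : SymProd Q n → Q)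
    (hη : ∀ K : SymProd Q n,
      ((η K : Q) : ellTwo) ∈ convexHull ℝ (((↑) : Q → ellTwo) '' (K.1 : Set Q)) ∧
      ∀ z ∈ convexHull ℝ (((↑) : Q → ellTwo) '' (K.1 : Set Q)),
        dist p ((η K : Q) : ellTwo) ≤ dist p z)
    (f : SymProd (X × Q) n → SymProd X n × Q)
    (hf : ∀ A : SymProd (X × Q) n,
      ((f A).1.1 : Set X) = Prod.fst '' (A.1 : Set (X × Q)) ∧
      ∃ K : SymProd Q n, (K.1 : Set Q) = Prod.snd '' (A.1 : Set (X × Q)) ∧ (f A).2 = η K)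
    (S : SymProd X n) (q₀ : Q) :
    (∀ B : SymProd (X × Q) n, f B = (S, q₀) → ∀ t : I, ∀ B' : SymProd (X × Q) n,
      (∀ z : X × Q, z ∈ (B'.1 : Set (X × Q)) ↔ ∃ w ∈ (B.1 : Set (X × Q)),
        z.1 = w.1 ∧ (z.2 : ellTwo) = (1 - (t : ℝ)) • ((w.2 : Q) : ellTwo) + (t : ℝ) • (q₀ : ellTwo)) →
      f B' = (S, q₀)) ∧
    ∃ G : {B : SymProd (X × Q) n // f B = (S, q₀)} × I →
        {B : SymProd (X × Q) n // f B = (S, q₀)},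
      Continuous G ∧
      (∀ B t, ∀ z : X × Q, z ∈ ((G (B, t)).1.1 : Set (X × Q)) ↔
        ∃ w ∈ (B.1.1 : Set (X × Q)), z.1 = w.1 ∧
          (z.2 : ellTwo) = (1 - (t : ℝ)) • ((w.2 : Q) : ellTwo) + (t : ℝ) • (q₀ : ellTwo)) ∧
      (∀ B, G (B, 0) = B) ∧
      ∀ B, ((G (B, 1)).1.1 : Set (X × Q)) = {z : X × Q | z.1 ∈ (S.1 : Set X) ∧ z.2 = q₀} :=
  stmt16_general n Q hconv hcomp p η hη f hf S q₀
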